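/- Let T be a finite tree with n vertices. Then the kernel B_T of the Lie algebra homomorphism χ : L_T → k sending every generator (vertex) to 1, where L_T is the graph Lie algebra of T over a field k, is a free Lie algebra of rank n − 1. -/

import Mathlib

/-!
Fix a root `r` and let `F` be the free Lie algebra on `V ∖ {r}`, with generators `u_v` and
`u_r := 0`. The morphism `α : F → L_T`, `u_v ↦ v - r`, lands in `ker χ`, and it is an isomorphism
onto `ker χ` because `L_T ≅ F ⋊_D k` with `χ` becoming the projection to `k`. Here `D` is the
derivation of `F` with `D u_v = d v`, where `d` is the potential of the antisymmetric edge function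
`(v, w) ↦ ⁅u_w, u_v⁆` obtained by summing it along the path from `r` (this is where `T` being a tree
is used). Then `v ↦ (u_v, 1)` respects the relations of `L_T`, and `(y, t) ↦ α y + t • r` is its
inverse; the latter is a Lie morphism because `α ∘ D = ad r ∘ α`.
-/

open SimpleGraph

/-- The defining relations of the graph (RAAG) Lie algebra of `G`. -/
def raagLieRels (k : Type) [Field k] {V : Type} (G : SimpleGraph V) :
    Set (FreeLieAlgebra k V) :=
  {x | ∃ v w, G.Adj v w ∧ x = ⁅FreeLieAlgebra.of k v, FreeLieAlgebra.of k w⁆}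

/-- The graph (RAAG) Lie algebra of `G` over `k`: the free Lie algebra on the
vertices modulo the brackets of adjacent vertices. -/
noncomputable def LieRAAG (k : Type) [Field k] {V : Type} (G : SimpleGraph V) : Type :=
  FreeLieAlgebra k V ⧸ LieSubmodule.lieSpan k (FreeLieAlgebra k V) (raagLieRels k G)

noncomputable instance (k : Type) [Field k] {V : Type} (G : SimpleGraph V) :
    LieRing (LieRAAG k G) := by unfold LieRAAG; infer_instance

noncomputable instance (k : Type) [Field k] {V : Type} (G : SimpleGraph V) :
    LieAlgebra k (LieRAAG k G) := by unfold LieRAAG; infer_instance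

/-- The generator of the graph Lie algebra corresponding to a vertex. -/
noncomputable def LieRAAG.gen (k : Type) [Field k] {V : Type} (G : SimpleGraph V) (v : V) :
    LieRAAG k G :=
  LieSubmodule.Quotient.mk
    (N := LieSubmodule.lieSpan k (FreeLieAlgebra k V) (raagLieRels k G))
    (FreeLieAlgebra.of k v)

attribute [local instance 100] LieRing.ofAssociativeRing

namespace FreeLieAlgebra

variable {R X : Type*} [CommRing R]

theorem mem_of_forall_of_mem {S : LieSubalgebra R (FreeLieAlgebra R X)}
    (hS : ∀ x, of R x ∈ S) (y : FreeLieAlgebra R X) : y ∈ S := by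
  let g : FreeLieAlgebra R X →ₗ⁅R⁆ S := lift R fun x => ⟨of R x, hS x⟩
  have hg : S.incl.comp g = LieHom.id := hom_ext fun x => by simp [g]
  have hy : (g y : FreeLieAlgebra R X) = y := congr($hg y)
  exact hy ▸ (g y).2

variable {Y : Type*} in
noncomputable def congr (e : X ≃ Y) : FreeLieAlgebra R X ≃ₗ⁅R⁆ FreeLieAlgebra R Y where
  __ := lift R (of R ∘ e)
  invFun := lift R (of R ∘ e.symm)
  left_inv y := congr($(hom_ext (F₁ := (lift R (of R ∘ e.symm)).comp (lift R (of R ∘ e)))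
    (F₂ := LieHom.id) fun x => by simp) y)
  right_inv y := congr($(hom_ext (F₁ := (lift R (of R ∘ e)).comp (lift R (of R ∘ e.symm)))
    (F₂ := LieHom.id) fun x => by simp) y)

end FreeLieAlgebra

namespace LieAlgebra.ofTwoCocycle

open LieModule.Cohomology

variable {R L M : Type*} [CommRing R] [LieRing L] [LieAlgebra R L] [AddCommGroup M] [Module R M]
  [LieRingModule L M] [LieModule R L M]

def fst (c : twoCocycle R L M) : ofTwoCocycle c →ₗ⁅R⁆ L where
  toFun x := ((ofProd c).symm x).1
  map_add' _ _ := rfl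
  map_smul' _ _ := rfl
  map_lie' := rfl

@[simp]
theorem fst_ofProd (c : twoCocycle R L M) (p : L × M) : fst c (ofProd c p) = p.1 := rfl

end LieAlgebra.ofTwoCocycle

namespace FreeLieAlgebra

open LieAlgebra LieModule.Cohomology

variable {R X M : Type*} [CommRing R] [AddCommGroup M] [Module R M]
  [LieRingModule (FreeLieAlgebra R X) M] [LieModule R (FreeLieAlgebra R X) M]

/- A derivation `D : L → M` is the same as the Lie morphism `x ↦ (x, D x)` into the trivial
extension `L ⋉ M`, i.e. the extension by the zero 2-cocycle. -/
variable (R) in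
noncomputable def graphOfDerivation (f : X → M) :
    FreeLieAlgebra R X →ₗ⁅R⁆ ofTwoCocycle (0 : twoCocycle R (FreeLieAlgebra R X) M) :=
  lift R fun x => ofProd _ (of R x, f x)

theorem fst_graphOfDerivation (f : X → M) (y : FreeLieAlgebra R X) :
    ((ofProd _).symm (graphOfDerivation R f y)).1 = y := by
  have h : (ofTwoCocycle.fst _).comp (graphOfDerivation R f) = LieHom.id :=
    hom_ext fun x => by simp [graphOfDerivation]
  exact congr($h y)

variable (R) in
noncomputable def liftDerivation (f : X → M) : LieDerivation R (FreeLieAlgebra R X) M where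
  toFun y := ((ofProd _).symm (graphOfDerivation R f y)).2
  map_add' _ _ := by simp
  map_smul' _ _ := by simp
  leibniz' a b := by
    simp [bracket_ofTwoCocycle, fst_graphOfDerivation]

@[simp]
theorem liftDerivation_of (f : X → M) (x : X) : liftDerivation R f (of R x) = f x := by
  simp [liftDerivation, graphOfDerivation]

end FreeLieAlgebra

def LieHom.toSpanSingleton {R L : Type*} [CommRing R] [LieRing L] [LieAlgebra R L] (x : L) :
    R →ₗ⁅R⁆ L where
  __ := LinearMap.toSpanSingleton R L x
  map_lie' := by simp [Ring.lie_def, mul_comm]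

@[simp]
theorem LieHom.toSpanSingleton_apply {R L : Type*} [CommRing R] [LieRing L] [LieAlgebra R L]
    (x : L) (t : R) : LieHom.toSpanSingleton x t = t • x := rfl

namespace LieAlgebra.SemiDirectSum

variable {R K L M : Type*} [CommRing R] [LieRing K] [LieAlgebra R K] [LieRing L] [LieAlgebra R L]
  [LieRing M] [LieAlgebra R M] {ψ : L →ₗ⁅R⁆ LieDerivation R K K}

def lift (f : K →ₗ⁅R⁆ M) (g : L →ₗ⁅R⁆ M) (h : ∀ x y, f (ψ x y) = ⁅g x, f y⁆) :
    K ⋊⁅ψ⁆ L →ₗ⁅R⁆ M where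
  toFun z := f z.left + g z.right
  map_add' _ _ := by simp only [add_eq_mk, map_add]; abel
  map_smul' _ _ := by simp
  map_lie' {z w} := by
    simp only [lie_eq_mk, map_add, map_sub, LieHom.map_lie, h, lie_add, add_lie]
    rw [← lie_skew (g w.right)]
    abel

@[simp]
theorem lift_apply (f : K →ₗ⁅R⁆ M) (g : L →ₗ⁅R⁆ M) (h : ∀ x y, f (ψ x y) = ⁅g x, f y⁆)
    (z : K ⋊⁅ψ⁆ L) : lift f g h z = f z.left + g z.right := rfl

end LieAlgebra.SemiDirectSum

namespace SimpleGraph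

variable {V : Type*} {G : SimpleGraph V}

theorem Preconnected.eq_of_forall_adj {β : Type*} (hG : G.Preconnected) {f : V → β}
    (hf : ∀ ⦃v w⦄, G.Adj v w → f v = f w) (v w : V) : f v = f w := by
  obtain ⟨p⟩ := hG v w
  induction p with
  | nil => rfl
  | cons h _ ih => exact (hf h).trans ih

theorem IsTree.exists_potential {A : Type*} [AddCommGroup A] (hG : G.IsTree) (r : V)
    (c : V → V → A) (hc : ∀ ⦃v w⦄, G.Adj v w → c w v = -c v w) :
    ∃ d : V → A, d r = 0 ∧ ∀ ⦃v w⦄, G.Adj v w → d w - d v = c v w := by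
  classical
  choose p hp _ using hG.existsUnique_path r
  let d v := ((p v).darts.map fun e => c e.fst e.snd).sum
  have hd_concat : ∀ ⦃v w⦄ (h : G.Adj v w), p w = (p v).concat h → d w = d v + c v w := by
    intro v w h hpw
    simp [d, hpw, Walk.darts_concat]
  refine ⟨d, by simp [d, (Walk.isPath_iff_nil.mp (hp r)).eq_nil], fun v w h => ?_⟩
  by_cases hv : v ∈ (p w).support
  · rw [hd_concat h (hG.isAcyclic.path_concat (hp v) (hp w) h hv)]
    abel
  · have hw := hG.isAcyclic.mem_support_of_ne_mem_support_of_adj_of_isPath (hp v) (hp w) h hv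
    rw [hd_concat h.symm (hG.isAcyclic.path_concat (hp w) (hp v) h.symm hw), hc h]
    abel

end SimpleGraph

namespace LieRAAG

variable {k : Type} [Field k] {V : Type} {G : SimpleGraph V}

variable (k G) in
noncomputable def mk : FreeLieAlgebra k V →ₗ⁅k⁆ LieRAAG k G where
  __ := (LieSubmodule.lieSpan k (FreeLieAlgebra k V) (raagLieRels k G)).toSubmodule.mkQ
  map_lie' := rfl

@[simp]
theorem mk_of (v : V) : mk k G (FreeLieAlgebra.of k v) = gen k G v := rfl

theorem mk_surjective : Function.Surjective (mk k G) :=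
  Submodule.Quotient.mk_surjective _

theorem lie_gen_of_adj {v w : V} (h : G.Adj v w) : ⁅gen k G v, gen k G w⁆ = 0 := by
  rw [← mk_of, ← mk_of, ← LieHom.map_lie]
  exact LieSubmodule.Quotient.mk_eq_zero'.mpr (LieSubmodule.subset_lieSpan ⟨v, w, h, rfl⟩)

theorem hom_ext {M : Type} [LieRing M] [LieAlgebra k M] {f g : LieRAAG k G →ₗ⁅k⁆ M}
    (h : ∀ v, f (gen k G v) = g (gen k G v)) : f = g := by
  have hmk : f.comp (mk k G) = g.comp (mk k G) := FreeLieAlgebra.hom_ext fun v => h v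
  ext x
  obtain ⟨y, rfl⟩ := mk_surjective x
  exact congr($hmk y)

noncomputable def lift {M : Type} [LieRing M] [LieAlgebra k M] (f : V → M)
    (hf : ∀ ⦃v w⦄, G.Adj v w → ⁅f v, f w⁆ = 0) : LieRAAG k G →ₗ⁅k⁆ M where
  __ := (LieSubmodule.lieSpan k (FreeLieAlgebra k V) (raagLieRels k G)).toSubmodule.liftQ
    (FreeLieAlgebra.lift k f).toLinearMap <| by
      have hrels : raagLieRels k G ⊆ (FreeLieAlgebra.lift k f).ker := by
        rintro _ ⟨v, w, h, rfl⟩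
        simp [hf h]
      exact fun x hx => LieHom.mem_ker.mp (LieSubmodule.lieSpan_le.mpr hrels hx)
  map_lie' {x y} := by
    obtain ⟨x, rfl⟩ := mk_surjective x
    obtain ⟨y, rfl⟩ := mk_surjective y
    rw [← LieHom.map_lie]
    exact (FreeLieAlgebra.lift k f).map_lie x y

@[simp]
theorem lift_gen {M : Type} [LieRing M] [LieAlgebra k M] (f : V → M)
    (hf : ∀ ⦃v w⦄, G.Adj v w → ⁅f v, f w⁆ = 0) (v : V) : lift f hf (gen k G v) = f v :=
  FreeLieAlgebra.lift_of_apply f v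

end LieRAAG

namespace LieRAAG

open LieAlgebra SemiDirectSum

variable {k : Type} [Field k] {V : Type} [DecidableEq V] {G : SimpleGraph V} (r : V)

variable (k) in
noncomputable def reducedGen (v : V) : FreeLieAlgebra k {v : V // v ≠ r} :=
  if h : v = r then 0 else FreeLieAlgebra.of k ⟨v, h⟩

@[simp]
theorem reducedGen_self : reducedGen k r r = 0 := dif_pos rfl

theorem reducedGen_of_ne {v : V} (h : v ≠ r) : reducedGen k r v = FreeLieAlgebra.of k ⟨v, h⟩ :=
  dif_neg h

variable (k G) in
noncomputable def ofReduced : FreeLieAlgebra k {v : V // v ≠ r} →ₗ⁅k⁆ LieRAAG k G :=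
  FreeLieAlgebra.lift k fun x => gen k G x - gen k G r

@[simp]
theorem ofReduced_reducedGen (v : V) :
    ofReduced k G r (reducedGen k r v) = gen k G v - gen k G r := by
  by_cases h : v = r
  · simp [h]
  · simp [reducedGen_of_ne r h, ofReduced]

/- The condition that the elements `(reducedGen k r v, 1)` of the semidirect product
`F ⋊_D k` satisfy the defining relations of `LieRAAG k G`. -/
variable (G) in
def RespectsEdges {r : V}
    (D : LieDerivation k (FreeLieAlgebra k {v : V // v ≠ r}) (FreeLieAlgebra k {v : V // v ≠ r})) :
    Prop :=
  ∀ ⦃v w⦄, G.Adj v w →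
    D (reducedGen k r w) - D (reducedGen k r v) = ⁅reducedGen k r w, reducedGen k r v⁆

theorem exists_derivation (hG : G.IsTree) (r : V) :
    ∃ D : LieDerivation k (FreeLieAlgebra k {v : V // v ≠ r}) (FreeLieAlgebra k {v : V // v ≠ r}),
      RespectsEdges G D := by
  obtain ⟨d, hd_root, hd_adj⟩ := hG.exists_potential r
    (fun v w => ⁅reducedGen k r w, reducedGen k r v⁆) fun v w _ => (lie_skew _ _).symm
  let D := FreeLieAlgebra.liftDerivation k fun x : {v : V // v ≠ r} => d x
  have hD : ∀ v, D (reducedGen k r v) = d v := fun v => by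
    by_cases h : v = r
    · simp [h, hd_root]
    · simp [D, reducedGen_of_ne r h]
  exact ⟨D, fun v w h => by simp only [hD, hd_adj h]⟩

section

variable {r} {D : LieDerivation k (FreeLieAlgebra k {v : V // v ≠ r})
  (FreeLieAlgebra k {v : V // v ≠ r})}

-- Both sides change by the same amount along each edge and agree at the root.
theorem ofReduced_derivation_reducedGen (hD : RespectsEdges G D) (hG : G.Preconnected) (v : V) :
    ofReduced k G r (D (reducedGen k r v)) = ⁅gen k G r, gen k G v⁆ := by
  suffices ∀ v, ofReduced k G r (D (reducedGen k r v)) - ⁅gen k G r, gen k G v⁆ = 0 from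
    sub_eq_zero.mp (this v)
  intro v
  refine (hG.eq_of_forall_adj (f := fun v =>
    ofReduced k G r (D (reducedGen k r v)) - ⁅gen k G r, gen k G v⁆) (fun v w h => ?_) v r).trans
    (by simp)
  have h' := congrArg (ofReduced k G r) (hD h)
  simp only [map_sub, LieHom.map_lie, ofReduced_reducedGen, lie_sub, sub_lie, lie_self,
    lie_gen_of_adj h.symm] at h'
  rw [← lie_skew (gen k G r) (gen k G w)]
  linear_combination (norm := abel) -h'

theorem ofReduced_derivation_apply (hD : RespectsEdges G D) (hG : G.Preconnected)
    (y : FreeLieAlgebra k {v : V // v ≠ r}) :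
    ofReduced k G r (D y) = ⁅gen k G r, ofReduced k G r y⁆ := by
  let S : LieSubalgebra k (FreeLieAlgebra k {v : V // v ≠ r}) :=
    { LinearMap.eqLocus ((ofReduced k G r).toLinearMap ∘ₗ D.toLinearMap)
        ((LieAlgebra.ad k _ (gen k G r)) ∘ₗ (ofReduced k G r).toLinearMap) with
      lie_mem' := fun {a b} (ha : ofReduced k G r (D a) = ⁅gen k G r, ofReduced k G r a⁆)
          (hb : ofReduced k G r (D b) = ⁅gen k G r, ofReduced k G r b⁆) => by
        show ofReduced k G r (D ⁅a, b⁆) = ⁅gen k G r, ofReduced k G r ⁅a, b⁆⁆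
        rw [LieDerivation.apply_lie_eq_sub, map_sub, LieHom.map_lie, LieHom.map_lie, ha, hb,
          LieHom.map_lie, leibniz_lie (gen k G r), ← lie_skew (ofReduced k G r b)]
        abel }
  refine FreeLieAlgebra.mem_of_forall_of_mem (S := S) (fun x => ?_) y
  show ofReduced k G r (D (FreeLieAlgebra.of k x)) =
    ⁅gen k G r, ofReduced k G r (FreeLieAlgebra.of k x)⁆
  rw [← reducedGen_of_ne r x.2, ofReduced_derivation_reducedGen hD hG, ofReduced_reducedGen,
    lie_sub, lie_self, sub_zero]

variable (hD : RespectsEdges G D)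

noncomputable def toSemiDirect :
    LieRAAG k G →ₗ⁅k⁆ FreeLieAlgebra k {v : V // v ≠ r} ⋊⁅LieHom.toSpanSingleton D⁆ k :=
  lift (fun v => ⟨reducedGen k r v, 1⟩) fun v w h => by
    simp only [lie_eq_mk, LieHom.toSpanSingleton_apply, one_smul, add_sub_assoc, hD h,
      ← lie_skew (reducedGen k r v), neg_add_cancel, lie_self, zero_eq_mk]

@[simp]
theorem toSemiDirect_gen (v : V) : toSemiDirect hD (gen k G v) = ⟨reducedGen k r v, 1⟩ :=
  lift_gen _ _ v

theorem toSemiDirect_comp_ofReduced : (toSemiDirect hD).comp (ofReduced k G r) = inl _ :=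
  FreeLieAlgebra.hom_ext fun x => by simp [ofReduced, reducedGen_of_ne r x.2]

variable (hG : G.Preconnected)

noncomputable def ofSemiDirect :
    FreeLieAlgebra k {v : V // v ≠ r} ⋊⁅LieHom.toSpanSingleton D⁆ k →ₗ⁅k⁆ LieRAAG k G :=
  SemiDirectSum.lift (ofReduced k G r) (LieHom.toSpanSingleton (gen k G r)) fun t y => by
    simp [ofReduced_derivation_apply hD hG]

theorem ofSemiDirect_comp_toSemiDirect :
    (ofSemiDirect hD hG).comp (toSemiDirect hD) = LieHom.id :=
  hom_ext fun v => by simp [ofSemiDirect]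

end

theorem ofReduced_injective (hG : G.IsTree) (r : V) : Function.Injective (ofReduced k G r) := by
  obtain ⟨D, hD⟩ := exists_derivation (k := k) hG r
  have h := toSemiDirect_comp_ofReduced hD
  intro x y hxy
  exact inl_injective _ (by rw [← h]; simp [hxy])

theorem mem_range_ofReduced_iff (hG : G.IsTree) (r : V) (χ : LieRAAG k G →ₗ⁅k⁆ k)
    (hχ : ∀ v, χ (gen k G v) = 1) (x : LieRAAG k G) :
    x ∈ (ofReduced k G r).range ↔ χ x = 0 := by
  obtain ⟨D, hD⟩ := exists_derivation (k := k) hG r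
  have hχβ : (projr _).comp (toSemiDirect hD) = χ := hom_ext fun v => by simp [hχ]
  have hχα : χ.comp (ofReduced k G r) = 0 := FreeLieAlgebra.hom_ext fun x => by simp [ofReduced, hχ]
  constructor
  · rintro ⟨y, rfl⟩
    exact congr($hχα y)
  · intro hx
    refine ⟨(toSemiDirect hD x).left, ?_⟩
    have h := congr($(ofSemiDirect_comp_toSemiDirect hD hG.connected.preconnected) x)
    have h2 : (toSemiDirect hD x).right = 0 := by rw [← hx, ← hχβ]; rfl
    simpa [ofSemiDirect, h2] using h

end LieRAAG

/-- for a finite tree `T` with `n` vertices, the Bestvina–Brady Lie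
algebra (the kernel of the length character of the graph Lie algebra of `T`) is a
free Lie algebra of rank `n - 1`. -/
theorem stmt13 (k : Type) [Field k] {V : Type} [Fintype V] (T : SimpleGraph V)
    (htree : T.IsTree) (χ : LieRAAG k T →ₗ⁅k⁆ k)
    (hχ : ∀ v, χ (LieRAAG.gen k T v) = 1) :
    Nonempty (↥χ.ker ≃ₗ⁅k⁆ FreeLieAlgebra k (Fin (Fintype.card V - 1))) := by
  classical
  obtain ⟨r⟩ := htree.connected.nonempty
  have hrange : ((LieRAAG.ofReduced k T r).range : Set (LieRAAG k T)) =
      (χ.ker : LieSubalgebra k (LieRAAG k T)) := by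
    ext x
    exact (LieRAAG.mem_range_ofReduced_iff htree r χ hχ x).trans LieHom.mem_ker.symm
  have hcard : Fintype.card {v // v ≠ r} = Fintype.card V - 1 := by simp
  exact ⟨((LieEquiv.ofInjective _ (LieRAAG.ofReduced_injective htree r)).trans
    (LieEquiv.ofEq _ _ hrange)).symm.trans (FreeLieAlgebra.congr (Fintype.equivFinOfCardEq hcard))⟩
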